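/- arXiv:1207.3853 — 4 statements merged into one kernel-verified Lean document; each statement's English description precedes it below -/
import Mathlib

section
/- Let c : (-π/2, π/2) → S² be a smooth curve in the unit sphere parametrized by arc length, and a₁₁ ∈ ℝ. Define ĉ(v) = c(arctan(v√(1+a₁₁²))) and ξ(v) = √(1+(1+a₁₁²)v²) · ĉ(v). Then ξ(v)·ξ(v) = 1+(1+a₁₁²)v², ξ'(v)·ξ'(v) = 1+a₁₁², and ξ(v)·ξ'(v) = (1+a₁₁²)v for all v ∈ ℝ. -/
noncomputable section
open Real Filter

/-- Euclidean dot product on ℝ³ (as ℝ × ℝ × ℝ). -/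
def dot3 (a b : ℝ × ℝ × ℝ) : ℝ := a.1 * b.1 + a.2.1 * b.2.1 + a.2.2 * b.2.2

/-- Cross product on ℝ³. -/
def cross3 (a b : ℝ × ℝ × ℝ) : ℝ × ℝ × ℝ :=
  (a.2.1 * b.2.2 - a.2.2 * b.2.1, a.2.2 * b.1 - a.1 * b.2.2, a.1 * b.2.1 - a.2.1 * b.1)

/-- Determinant of three column vectors in ℝ³. -/
def det3 (a b c : ℝ × ℝ × ℝ) : ℝ := dot3 (cross3 a b) c

/-- Euclidean norm on ℝ³. -/
def norm3 (a : ℝ × ℝ × ℝ) : ℝ := Real.sqrt (dot3 a a)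

/-- Partial derivative in the first variable. -/
def p1 {E : Type*} [NormedAddCommGroup E] [NormedSpace ℝ E] (f : ℝ → ℝ → E) (u v : ℝ) : E :=
  deriv (fun t => f t v) u

/-- Partial derivative in the second variable. -/
def p2 {E : Type*} [NormedAddCommGroup E] [NormedSpace ℝ E] (f : ℝ → ℝ → E) (u v : ℝ) : E :=
  deriv (fun t => f u t) v

lemma myFst {f : ℝ → ℝ × ℝ × ℝ} {f' : ℝ × ℝ × ℝ} {x : ℝ} (h : HasDerivAt f f' x) :
    HasDerivAt (fun t => (f t).1) f'.1 x := by
  simpa using (h.hasFDerivAt.fst).hasDerivAt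

lemma mySnd1 {f : ℝ → ℝ × ℝ × ℝ} {f' : ℝ × ℝ × ℝ} {x : ℝ} (h : HasDerivAt f f' x) :
    HasDerivAt (fun t => (f t).2.1) f'.2.1 x := by
  simpa using ((h.hasFDerivAt.snd).fst).hasDerivAt

lemma mySnd2 {f : ℝ → ℝ × ℝ × ℝ} {f' : ℝ × ℝ × ℝ} {x : ℝ} (h : HasDerivAt f f' x) :
    HasDerivAt (fun t => (f t).2.2) f'.2.2 x := by
  simpa using ((h.hasFDerivAt.snd).snd).hasDerivAt

lemma dot3_comb (a b : ℝ) (x y : ℝ × ℝ × ℝ) :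
    dot3 (a • x + b • y) (a • x + b • y)
      = a ^ 2 * dot3 x x + 2 * a * b * dot3 x y + b ^ 2 * dot3 y y := by
  simp only [dot3, Prod.fst_add, Prod.snd_add, Prod.smul_fst, Prod.smul_snd, smul_eq_mul]
  ring

lemma dot3_comb' (a b r : ℝ) (x y : ℝ × ℝ × ℝ) :
    dot3 (r • x) (a • x + b • y) = r * a * dot3 x x + r * b * dot3 x y := by
  simp only [dot3, Prod.fst_add, Prod.snd_add, Prod.smul_fst, Prod.smul_snd, smul_eq_mul]
  ring

lemma ortho (c : ℝ → ℝ × ℝ × ℝ) (hc : ContDiff ℝ (⊤ : ℕ∞) c)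
    (hc1 : ∀ s : ℝ, |s| < π / 2 → dot3 (c s) (c s) = 1)
    {s : ℝ} (hs : |s| < π / 2) : dot3 (c s) (deriv c s) = 0 := by
  set d := deriv c s with hd
  have hder : HasDerivAt c d s := ((hc.differentiable (by simp)) s).hasDerivAt
  have h1 := myFst hder
  have h2 := mySnd1 hder
  have h3 := mySnd2 hder
  have hF : HasDerivAt (fun t => dot3 (c t) (c t))
      (2 * dot3 (c s) d) s := by
    have := ((h1.mul h1).add (h2.mul h2)).add (h3.mul h3)
    have heq : d.1 * (c s).1 + (c s).1 * d.1 + (d.2.1 * (c s).2.1 + (c s).2.1 * d.2.1)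
        + (d.2.2 * (c s).2.2 + (c s).2.2 * d.2.2) = 2 * dot3 (c s) d := by
      simp [dot3]; ring
    rw [heq] at this
    exact this.congr_of_eventuallyEq (by filter_upwards with t; simp [dot3])
  have hopen : ∀ᶠ t in nhds s, |t| < π / 2 :=
    (isOpen_lt continuous_abs continuous_const).eventually_mem (by simpa using hs) |>.mono
      (fun t ht => ht)
  have hF0 : HasDerivAt (fun t => dot3 (c t) (c t)) 0 s := by
    refine (hasDerivAt_const s (1 : ℝ)).congr_of_eventuallyEq ?_
    filter_upwards [hopen] with t ht using (hc1 t ht)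
  have := hF.unique hF0
  linarith

/-- properties of `ξ(v) = √(1+(1+a₁₁²)v²)·c(arctan(v√(1+a₁₁²)))`. -/
theorem stmt_2 (a11 : ℝ) (c : ℝ → ℝ × ℝ × ℝ)
    (hc : ContDiff ℝ (⊤ : ℕ∞) c)
    (hc1 : ∀ s : ℝ, |s| < π / 2 → dot3 (c s) (c s) = 1)
    (hc2 : ∀ s : ℝ, |s| < π / 2 → dot3 (deriv c s) (deriv c s) = 1) :
    let ξ : ℝ → ℝ × ℝ × ℝ := fun v =>
      Real.sqrt (1 + (1 + a11 ^ 2) * v ^ 2) •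
        c (Real.arctan (v * Real.sqrt (1 + a11 ^ 2)))
    ∀ v : ℝ,
      dot3 (ξ v) (ξ v) = 1 + (1 + a11 ^ 2) * v ^ 2 ∧
      dot3 (deriv ξ v) (deriv ξ v) = 1 + a11 ^ 2 ∧
      dot3 (ξ v) (deriv ξ v) = (1 + a11 ^ 2) * v := by
  intro ξ v
  set k2 : ℝ := 1 + a11 ^ 2 with hk2def
  have hk2pos : 0 < k2 := by positivity
  set k : ℝ := Real.sqrt k2 with hkdef
  have hksq : k ^ 2 = k2 := Real.sq_sqrt hk2pos.le
  have hkpos : 0 < k := Real.sqrt_pos.mpr hk2pos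
  -- the angle
  set θ : ℝ := Real.arctan (v * k) with hθdef
  have hθ : |θ| < π / 2 := by
    rw [abs_lt]
    exact ⟨neg_pi_div_two_lt_arctan _, arctan_lt_pi_div_two _⟩
  -- radius
  have hqpos : 0 < 1 + k2 * v ^ 2 := by positivity
  set r : ℝ := Real.sqrt (1 + k2 * v ^ 2) with hrdef
  have hrpos : 0 < r := Real.sqrt_pos.mpr hqpos
  have hrsq : r ^ 2 = 1 + k2 * v ^ 2 := Real.sq_sqrt hqpos.le
  -- derivative of the radius
  have hq : HasDerivAt (fun w : ℝ => 1 + k2 * w ^ 2) (2 * k2 * v) v := by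
    have h := ((hasDerivAt_pow 2 v).const_mul k2).const_add 1
    simpa [mul_comm, mul_assoc, mul_left_comm] using h
  have hr : HasDerivAt (fun w : ℝ => Real.sqrt (1 + k2 * w ^ 2)) (k2 * v / r) v := by
    have h := (Real.hasDerivAt_sqrt hqpos.ne').comp v hq
    refine h.congr_deriv (Eq.symm ?_)
    rw [← hrdef]
    field_simp
  -- derivative of the angle
  have hθ' : HasDerivAt (fun w : ℝ => Real.arctan (w * k)) (k / r ^ 2) v := by
    have h := (Real.hasDerivAt_arctan (v * k)).comp v ((hasDerivAt_id v).mul_const k)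
    refine h.congr_deriv (Eq.symm ?_)
    rw [hrsq]
    have : (v * k) ^ 2 = k2 * v ^ 2 := by rw [mul_pow, hksq]; ring
    rw [this]
    ring
  -- derivative of c at θ
  have hcder : HasDerivAt c (deriv c θ) θ := ((hc.differentiable (by simp)) θ).hasDerivAt
  -- derivative of g = c ∘ arctan (· * k)
  have hg : HasDerivAt (fun w : ℝ => c (Real.arctan (w * k)))
      ((k / r ^ 2) • deriv c θ) v := by
    exact HasDerivAt.scomp v (by rw [hθdef]; exact hcder) hθ'
  -- derivative of ξ
  have hξ : HasDerivAt ξ ((k2 * v / r) • c θ + r • ((k / r ^ 2) • deriv c θ)) v := by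
    have h := hr.smul hg
    refine h.congr_deriv (Eq.symm ?_)
    rw [← hrdef]
    abel
  have hderξ : deriv ξ v = (k2 * v / r) • c θ + (k / r) • deriv c θ := by
    rw [hξ.deriv, smul_smul]
    congr 2
    field_simp
  have hξv : ξ v = r • c θ := rfl
  have Hxx : dot3 (c θ) (c θ) = 1 := hc1 θ hθ
  have Hyy : dot3 (deriv c θ) (deriv c θ) = 1 := hc2 θ hθ
  have Hxy : dot3 (c θ) (deriv c θ) = 0 := ortho c hc hc1 hθ
  refine ⟨?_, ?_, ?_⟩
  · have : ξ v = r • c θ + (0 : ℝ) • deriv c θ := by rw [hξv]; simp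
    rw [this, dot3_comb, Hxx, Hxy, Hyy, hrsq]
    ring
  · rw [hderξ, dot3_comb, Hxx, Hxy, Hyy]
    field_simp
    rw [hksq, hrsq]
    ring
  · rw [hξv, hderξ, dot3_comb', Hxx, Hxy]
    field_simp
    ring
end
end

section
/- If the spherical curve c is a great circle through (1,0,0) with initial velocity (0,1,a₁₁)/√(1+a₁₁²), then the ruled surface f_c(u,v) = γ(v) + uξ(v) of the construction above is congruent to the degenerate quadratic cross cap f₀(u,v) = (u, uv, a₁₁uv + (a₀₂/2)v²). -/
/-!
On a great circle `c s = cos s • p + sin s • q`, the substitution `s = arctan x` together with the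
rescaling by `√(1 + x²)` turns `c` into the straight line `p + x • q` (central projection onto the
tangent plane at `p`). Hence `ξ` is affine, `ξ'` is constant, `B` is the constant vector
`(0, 0, 1 + a₁₁²)`, and `γ(v) = (0, 0, a₀₂ v² / 2)`; so `f_c` coincides with the cross cap itself.
-/

noncomputable section
open Real Filter

theorem sqrt_one_add_sq_smul_cos_sin_arctan {E : Type*} [AddCommGroup E] [Module ℝ E]
    (p q : E) (x : ℝ) :
    √(1 + x ^ 2) • (cos (arctan x) • p + sin (arctan x) • q) = p + x • q := by
  have h : √(1 + x ^ 2) ≠ 0 := (sqrt_pos.mpr (by positivity)).ne'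
  rw [cos_arctan, sin_arctan, smul_add, smul_smul, smul_smul, mul_one_div_cancel h,
    mul_div_cancel₀ x h, one_smul]

theorem hasDerivAt_const_add_smul {E : Type*} [NormedAddCommGroup E] [NormedSpace ℝ E]
    (p w : E) (v : ℝ) : HasDerivAt (fun t : ℝ => p + t • w) w v := by
  simpa using ((hasDerivAt_id v).smul_const w).const_add p

theorem intervalIntegral_id_smul_const {E : Type*} [NormedAddCommGroup E] [NormedSpace ℝ E]
    [CompleteSpace E] (w : E) (v : ℝ) : ∫ t in (0:ℝ)..v, t • w = (v ^ 2 / 2) • w := by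
  rw [intervalIntegral.integral_smul_const, integral_id]
  norm_num

theorem cross3_add_smul_self (p w : ℝ × ℝ × ℝ) (t : ℝ) :
    cross3 (p + t • w) w = cross3 p w := by
  obtain ⟨p₁, p₂, p₃⟩ := p
  obtain ⟨w₁, w₂, w₃⟩ := w
  simp only [cross3, Prod.smul_mk, Prod.mk_add_mk, smul_eq_mul, Prod.mk.injEq]
  refine ⟨?_, ?_, ?_⟩ <;> ring

theorem stmt_5_general (a02 a11 : ℝ) (c : ℝ → ℝ × ℝ × ℝ)
    (hc : ∀ s : ℝ, c s =
      Real.cos s • ((1:ℝ), (0:ℝ), (0:ℝ)) +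
      Real.sin s • ((Real.sqrt (1 + a11 ^ 2))⁻¹ • ((0:ℝ), (1:ℝ), a11))) :
    let ξ : ℝ → ℝ × ℝ × ℝ := fun v =>
      Real.sqrt (1 + (1 + a11 ^ 2) * v ^ 2) •
        c (Real.arctan (v * Real.sqrt (1 + a11 ^ 2)))
    let B : ℝ → ℝ × ℝ × ℝ := fun v => a11 • deriv ξ v + cross3 (ξ v) (deriv ξ v)
    let γ : ℝ → ℝ × ℝ × ℝ := fun v => (a02 / (1 + a11 ^ 2)) • ∫ t in (0:ℝ)..v, t • B t
    let fc : ℝ → ℝ → ℝ × ℝ × ℝ := fun u v => γ v + u • ξ v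
    let f0 : ℝ → ℝ → ℝ × ℝ × ℝ :=
      fun u v => (u, u * v, a11 * u * v + a02 / 2 * v ^ 2)
    ∃ (O : (ℝ × ℝ × ℝ) →ₗ[ℝ] ℝ × ℝ × ℝ) (b : ℝ × ℝ × ℝ),
      (∀ x y : ℝ × ℝ × ℝ, dot3 (O x) (O y) = dot3 x y) ∧
      ∀ u v : ℝ, fc u v = O (f0 u v) + b := by
  intro ξ B γ fc f0
  have hα : 0 < √(1 + a11 ^ 2) := sqrt_pos.mpr (by positivity)
  have hξ : ∀ v, ξ v = ((1:ℝ), (0:ℝ), (0:ℝ)) + v • ((0:ℝ), (1:ℝ), a11) := fun v => by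
    have h : 1 + (1 + a11 ^ 2) * v ^ 2 = 1 + (v * √(1 + a11 ^ 2)) ^ 2 := by
      rw [mul_pow, sq_sqrt (by positivity)]
      ring
    simp only [ξ, hc, h]
    rw [sqrt_one_add_sq_smul_cos_sin_arctan, smul_smul, mul_inv_cancel_right₀ hα.ne']
  have hξ' : ∀ v, deriv ξ v = ((0:ℝ), (1:ℝ), a11) := fun v => by
    rw [show ξ = _ from funext hξ]
    exact (hasDerivAt_const_add_smul _ _ v).deriv
  have hB : ∀ v, B v = ((0:ℝ), (0:ℝ), 1 + a11 ^ 2) := fun v => by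
    simp only [B]
    rw [hξ', hξ, cross3_add_smul_self]
    simp only [cross3, Prod.smul_mk, Prod.mk_add_mk, smul_eq_mul, Prod.mk.injEq]
    refine ⟨?_, ?_, ?_⟩ <;> ring
  have hγ : ∀ v, γ v = ((0:ℝ), (0:ℝ), a02 / 2 * v ^ 2) := fun v => by
    simp only [γ, hB]
    rw [intervalIntegral_id_smul_const, smul_smul]
    simp only [Prod.smul_mk, smul_eq_mul, mul_zero, Prod.mk.injEq, true_and]
    field_simp
  refine ⟨LinearMap.id, 0, fun _ _ => rfl, fun u v => ?_⟩
  simp only [fc, f0, hγ, hξ, LinearMap.id_coe, id_eq, add_zero, Prod.smul_mk, smul_eq_mul,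
    Prod.mk_add_mk, Prod.mk.injEq]
  refine ⟨?_, ?_, ?_⟩ <;> ring

/-- if `c` is the great circle through `(1,0,0)` with initial velocity
`(0,1,a₁₁)/√(1+a₁₁²)`, then `f_c` is congruent to the degenerate quadratic cross cap. -/
theorem stmt_5 (a02 a11 : ℝ) (ha02 : 0 < a02) (c : ℝ → ℝ × ℝ × ℝ)
    (hc : ∀ s : ℝ, c s =
      Real.cos s • ((1:ℝ), (0:ℝ), (0:ℝ)) +
      Real.sin s • ((Real.sqrt (1 + a11 ^ 2))⁻¹ • ((0:ℝ), (1:ℝ), a11))) :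
    let ξ : ℝ → ℝ × ℝ × ℝ := fun v =>
      Real.sqrt (1 + (1 + a11 ^ 2) * v ^ 2) •
        c (Real.arctan (v * Real.sqrt (1 + a11 ^ 2)))
    let B : ℝ → ℝ × ℝ × ℝ := fun v => a11 • deriv ξ v + cross3 (ξ v) (deriv ξ v)
    let γ : ℝ → ℝ × ℝ × ℝ := fun v => (a02 / (1 + a11 ^ 2)) • ∫ t in (0:ℝ)..v, t • B t
    let fc : ℝ → ℝ → ℝ × ℝ × ℝ := fun u v => γ v + u • ξ v
    let f0 : ℝ → ℝ → ℝ × ℝ × ℝ :=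
      fun u v => (u, u * v, a11 * u * v + a02 / 2 * v ^ 2)
    ∃ (O : (ℝ × ℝ × ℝ) →ₗ[ℝ] ℝ × ℝ × ℝ) (b : ℝ × ℝ × ℝ),
      (∀ x y : ℝ × ℝ × ℝ, dot3 (O x) (O y) = dot3 x y) ∧
      ∀ u v : ℝ, fc u v = O (f0 u v) + b :=
  stmt_5_general a02 a11 c hc
end
end

section
/- For the quadratic cross cap f(u,v) = (u, uv, (a₂₀u² + 2a₁₁uv + a₀₂v²)/2) with a₀₂ > 0, evaluated at (0,0): |f_u × f_{vv}| / (4|f_u|³[f_u,f_{uv},f_{vv}]²) · ([f_u,f_{uu},f_{vv}]² + 4[f_u,f_{uv},f_{vv}][f_u,f_{uv},f_{uu}]) = a₂₀. -/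
noncomputable section
open Real Filter

/-! The first partials of the normal form are affine in `(u, v)`, so its second partials are
constant: at the origin `f_u = (1,0,0)`, `f_uu = (0,0,a₂₀)`, `f_uv = (0,1,a₁₁)`, `f_vv = (0,0,a₀₂)`.
Then `|f_u × f_vv| = [f_u,f_uv,f_vv] = a₀₂`, `[f_u,f_uu,f_vv] = 0` and `[f_u,f_uv,f_uu] = a₂₀`, so
the expression is `a₀₂ · 4a₀₂a₂₀ / (4a₀₂²) = a₂₀`. -/

def crossCap (a20 a11 a02 u v : ℝ) : ℝ × ℝ × ℝ :=
  (u, u * v, (a20 * u ^ 2 + 2 * a11 * u * v + a02 * v ^ 2) / 2)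

section PartialDerivatives

variable {E : Type*} [NormedAddCommGroup E] [NormedSpace ℝ E]

theorem p1_eq_of_hasDerivAt {f g : ℝ → ℝ → E} (h : ∀ u v, HasDerivAt (f · v) (g u v) u) :
    p1 f = g :=
  funext₂ fun u v => (h u v).deriv

theorem p2_eq_of_hasDerivAt {f g : ℝ → ℝ → E} (h : ∀ u v, HasDerivAt (f u ·) (g u v) v) :
    p2 f = g :=
  funext₂ fun u v => (h u v).deriv

theorem p1_affine (c d e : E) : p1 (fun u v : ℝ => c + u • d + v • e) = fun _ _ => d :=
  p1_eq_of_hasDerivAt fun u v => by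
    simpa using (((hasDerivAt_id u).smul_const d).const_add c).add_const (v • e)

theorem p2_affine (c d e : E) : p2 (fun u v : ℝ => c + u • d + v • e) = fun _ _ => e :=
  p2_eq_of_hasDerivAt fun u v => by
    simpa using ((hasDerivAt_id v).smul_const e).const_add (c + u • d)

end PartialDerivatives

section CrossCap

variable (a20 a11 a02 : ℝ)

theorem p1_crossCap :
    p1 (crossCap a20 a11 a02) = fun u v => (1, 0, 0) + u • (0, 0, a20) + v • (0, 1, a11) := by
  refine p1_eq_of_hasDerivAt fun u v => ?_
  have hthird : HasDerivAt (fun t => (a20 * t ^ 2 + 2 * a11 * t * v + a02 * v ^ 2) / 2)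
      (a20 * u + a11 * v) u :=
    ((((hasDerivAt_pow 2 u).const_mul a20).add
      (((hasDerivAt_id u).const_mul (2 * a11)).mul_const v)).add_const (a02 * v ^ 2)).div_const 2
      |>.congr_deriv (by ring)
  exact (hasDerivAt_id u).prodMk (((hasDerivAt_id u).mul_const v).prodMk hthird)
    |>.congr_deriv (by ext <;> simp [mul_comm])

theorem p2_crossCap :
    p2 (crossCap a20 a11 a02) = fun u v => 0 + u • (0, 1, a11) + v • (0, 0, a02) := by
  refine p2_eq_of_hasDerivAt fun u v => ?_
  have hthird : HasDerivAt (fun t => (a20 * u ^ 2 + 2 * a11 * u * t + a02 * t ^ 2) / 2)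
      (a11 * u + a02 * v) v :=
    ((((hasDerivAt_id v).const_mul (2 * a11 * u)).const_add (a20 * u ^ 2)).add
      ((hasDerivAt_pow 2 v).const_mul a02)).div_const 2 |>.congr_deriv (by ring)
  exact (hasDerivAt_const v u).prodMk (((hasDerivAt_id v).const_mul u).prodMk hthird)
    |>.congr_deriv (by ext <;> simp [mul_comm])

end CrossCap

/-- verification of the intrinsic formula for `a₂₀` on the
quadratic cross cap normal form. -/
theorem stmt_7 (a20 a11 a02 : ℝ) (ha02 : 0 < a02) :
    let f : ℝ → ℝ → ℝ × ℝ × ℝ := fun u v =>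
      (u, u * v, (a20 * u ^ 2 + 2 * a11 * u * v + a02 * v ^ 2) / 2)
    let fu := p1 f 0 0
    let fuu := p1 (p1 f) 0 0
    let fuv := p1 (p2 f) 0 0
    let fvv := p2 (p2 f) 0 0
    norm3 (cross3 fu fvv) / (4 * norm3 fu ^ 3 * det3 fu fuv fvv ^ 2) *
        (det3 fu fuu fvv ^ 2 + 4 * det3 fu fuv fvv * det3 fu fuv fuu) = a20 := by
  intro f fu fuu fuv fvv
  have hf : f = crossCap a20 a11 a02 := rfl
  have hfu : fu = (1, 0, 0) := by simp [fu, hf, p1_crossCap]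
  have hfuu : fuu = (0, 0, a20) := by simp only [fuu, hf, p1_crossCap, p1_affine]
  have hfuv : fuv = (0, 1, a11) := by simp only [fuv, hf, p2_crossCap, p1_affine]
  have hfvv : fvv = (0, 0, a02) := by simp only [fvv, hf, p2_crossCap, p2_affine]
  have hcross : norm3 (cross3 fu fvv) = a02 := by
    simp [hfu, hfvv, norm3, cross3, dot3, ← sq, Real.sqrt_sq ha02.le]
  have hnorm : norm3 fu = 1 := by simp [hfu, norm3, dot3]
  have hdet_uv_vv : det3 fu fuv fvv = a02 := by simp [hfu, hfuv, hfvv, det3, cross3, dot3]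
  have hdet_uu_vv : det3 fu fuu fvv = 0 := by simp [hfu, hfuu, hfvv, det3, cross3, dot3]
  have hdet_uv_uu : det3 fu fuv fuu = a20 := by simp [hfu, hfuv, hfuu, det3, cross3, dot3]
  rw [hcross, hnorm, hdet_uv_vv, hdet_uu_vv, hdet_uv_uu]
  field_simp
  ring
end
end

section
/- Let f : U → ℝ³ be smooth with a cross cap at the origin in admissible coordinates (f_v(0,0)=0, Δ := [f_u,f_{uv},f_{vv}](0,0) ≠ 0). Set h := EG − F² where E,F,G are the first fundamental form coefficients. Then at (0,0): Δ² = (1/(4E)) · (h_{uu}h_{vv} − h_{uv}²). -/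
noncomputable section
open Real Filter

/- ### Auxiliary lemmas -/

lemma smooth_pd {E' : Type*} [NormedAddCommGroup E'] [NormedSpace ℝ E'] {g : ℝ × ℝ → E'}
    (hg : ContDiff ℝ (⊤ : ℕ∞) g) (w : ℝ × ℝ) : ContDiff ℝ (⊤ : ℕ∞) (fun p => fderiv ℝ g p w) :=
  (ContinuousLinearMap.apply ℝ E' w).contDiff.comp (hg.fderiv_right (by simp))

lemma pd1_eq {E' : Type*} [NormedAddCommGroup E'] [NormedSpace ℝ E'] (g : ℝ × ℝ → E')
    (u v : ℝ) (hg : DifferentiableAt ℝ g (u, v)) :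
    deriv (fun t => g (t, v)) u = fderiv ℝ g (u, v) (1, 0) := by
  have h1 : HasDerivAt (fun t : ℝ => ((t, v) : ℝ × ℝ)) (1, 0) u :=
    HasDerivAt.prodMk (hasDerivAt_id u) (hasDerivAt_const u v)
  exact (hg.hasFDerivAt.comp_hasDerivAt u h1).deriv

lemma pd2_eq {E' : Type*} [NormedAddCommGroup E'] [NormedSpace ℝ E'] (g : ℝ × ℝ → E')
    (u v : ℝ) (hg : DifferentiableAt ℝ g (u, v)) :
    deriv (fun t => g (u, t)) v = fderiv ℝ g (u, v) (0, 1) := by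
  have h1 : HasDerivAt (fun t : ℝ => ((u, t) : ℝ × ℝ)) (0, 1) v :=
    HasDerivAt.prodMk (hasDerivAt_const v u) (hasDerivAt_id v)
  exact (hg.hasFDerivAt.comp_hasDerivAt v h1).deriv

lemma fderiv_dot3 (A B : ℝ × ℝ → ℝ × ℝ × ℝ) (p w : ℝ × ℝ)
    (hA : DifferentiableAt ℝ A p) (hB : DifferentiableAt ℝ B p) :
    fderiv ℝ (fun q => dot3 (A q) (B q)) p w
      = dot3 (fderiv ℝ A p w) (B p) + dot3 (A p) (fderiv ℝ B p w) := by
  have hA' := hA.hasFDerivAt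
  have hB' := hB.hasFDerivAt
  have H := ((hA'.fst.mul hB'.fst).add (hA'.snd.fst.mul hB'.snd.fst)).add
      (hA'.snd.snd.mul hB'.snd.snd)
  have hg : fderiv ℝ (fun q => dot3 (A q) (B q)) p = _ := H.fderiv
  rw [hg]
  simp [dot3, ContinuousLinearMap.comp_apply]
  ring

lemma contDiff_dot3 {A B : ℝ × ℝ → ℝ × ℝ × ℝ} (hA : ContDiff ℝ (⊤ : ℕ∞) A) (hB : ContDiff ℝ (⊤ : ℕ∞) B) :
    ContDiff ℝ (⊤ : ℕ∞) (fun q => dot3 (A q) (B q)) := by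
  simp only [dot3]
  exact ((hA.fst.mul hB.fst).add (hA.snd.fst.mul hB.snd.fst)).add (hA.snd.snd.mul hB.snd.snd)

lemma fderiv_mul3 {a b : ℝ × ℝ → ℝ} {p w : ℝ × ℝ}
    (ha : DifferentiableAt ℝ a p) (hb : DifferentiableAt ℝ b p) :
    fderiv ℝ (fun q => a q * b q) p w = fderiv ℝ a p w * b p + a p * fderiv ℝ b p w := by
  rw [fderiv_fun_mul ha hb]
  simp
  ring

lemma fderiv_add3 {a b : ℝ × ℝ → ℝ} {p w : ℝ × ℝ}
    (ha : DifferentiableAt ℝ a p) (hb : DifferentiableAt ℝ b p) :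
    fderiv ℝ (fun q => a q + b q) p w = fderiv ℝ a p w + fderiv ℝ b p w := by
  rw [fderiv_fun_add ha hb]; simp

lemma fderiv_sub3 {a b : ℝ × ℝ → ℝ} {p w : ℝ × ℝ}
    (ha : DifferentiableAt ℝ a p) (hb : DifferentiableAt ℝ b p) :
    fderiv ℝ (fun q => a q - b q) p w = fderiv ℝ a p w - fderiv ℝ b p w := by
  rw [fderiv_fun_sub ha hb]; simp

lemma fderiv_cmul3 {a : ℝ × ℝ → ℝ} {p w : ℝ × ℝ} (c : ℝ)
    (ha : DifferentiableAt ℝ a p) :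
    fderiv ℝ (fun q => c * a q) p w = c * fderiv ℝ a p w := by
  rw [fderiv_const_mul ha]; simp

lemma fderiv_hform {Eu Fu Gu : ℝ × ℝ → ℝ} {p w : ℝ × ℝ}
    (hE : DifferentiableAt ℝ Eu p) (hF : DifferentiableAt ℝ Fu p)
    (hG : DifferentiableAt ℝ Gu p) :
    fderiv ℝ (fun q => Eu q * Gu q - Fu q ^ 2) p w
      = fderiv ℝ Eu p w * Gu p + Eu p * fderiv ℝ Gu p w - 2 * Fu p * fderiv ℝ Fu p w := by
  have e : (fun q => Eu q * Gu q - Fu q ^ 2) = fun q => Eu q * Gu q - Fu q * Fu q := by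
    funext q; ring
  rw [e, fderiv_sub3 (a := fun q => Eu q * Gu q) (b := fun q => Fu q * Fu q) (hE.mul hG) (hF.mul hF), fderiv_mul3 hE hG, fderiv_mul3 hF hF]
  ring

lemma key (A B : ℝ × ℝ → ℝ × ℝ × ℝ) (hA : ContDiff ℝ (⊤ : ℕ∞) A) (hB : ContDiff ℝ (⊤ : ℕ∞) B)
    (hB0 : B (0, 0) = 0) (w w' : ℝ × ℝ) :
    fderiv ℝ (fun p => fderiv ℝ
        (fun q => dot3 (A q) (A q) * dot3 (B q) (B q) - dot3 (A q) (B q) ^ 2) p w) (0, 0) w'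
    = 2 * dot3 (A (0, 0)) (A (0, 0)) * dot3 (fderiv ℝ B (0, 0) w) (fderiv ℝ B (0, 0) w')
      - 2 * dot3 (A (0, 0)) (fderiv ℝ B (0, 0) w') * dot3 (A (0, 0)) (fderiv ℝ B (0, 0) w) := by
  set Aw := fun p => fderiv ℝ A p w with hAwdef
  set Bw := fun p => fderiv ℝ B p w with hBwdef
  have hAw : ContDiff ℝ (⊤ : ℕ∞) Aw := smooth_pd hA w
  have hBw : ContDiff ℝ (⊤ : ℕ∞) Bw := smooth_pd hB w
  have dA := hA.differentiable (by simp)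
  have dB := hB.differentiable (by simp)
  have dAw := hAw.differentiable (by simp)
  have dBw := hBw.differentiable (by simp)
  have hx1 : ContDiff ℝ (⊤ : ℕ∞) (fun p => dot3 (Aw p) (A p) + dot3 (A p) (Aw p)) :=
    (contDiff_dot3 hAw hA).add (contDiff_dot3 hA hAw)
  have hy1 : ContDiff ℝ (⊤ : ℕ∞) (fun p => dot3 (Bw p) (B p) + dot3 (B p) (Bw p)) :=
    (contDiff_dot3 hBw hB).add (contDiff_dot3 hB hBw)
  have hz1 : ContDiff ℝ (⊤ : ℕ∞) (fun p => dot3 (Aw p) (B p) + dot3 (A p) (Bw p)) :=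
    (contDiff_dot3 hAw hB).add (contDiff_dot3 hA hBw)
  have hz0 : ContDiff ℝ (⊤ : ℕ∞) (fun p => 2 * dot3 (A p) (B p)) :=
    contDiff_const.mul (contDiff_dot3 hA hB)
  have hEU : ContDiff ℝ (⊤ : ℕ∞) (fun p => dot3 (A p) (A p)) := contDiff_dot3 hA hA
  have hGU : ContDiff ℝ (⊤ : ℕ∞) (fun p => dot3 (B p) (B p)) := contDiff_dot3 hB hB
  have hstep : (fun p => fderiv ℝ
        (fun q => dot3 (A q) (A q) * dot3 (B q) (B q) - dot3 (A q) (B q) ^ 2) p w)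
      = fun p =>
        (dot3 (Aw p) (A p) + dot3 (A p) (Aw p)) * dot3 (B p) (B p)
        + dot3 (A p) (A p) * (dot3 (Bw p) (B p) + dot3 (B p) (Bw p))
        - 2 * dot3 (A p) (B p) * (dot3 (Aw p) (B p) + dot3 (A p) (Bw p)) := by
    funext p
    rw [fderiv_hform ((contDiff_dot3 hA hA).differentiable (by simp) p)
        ((contDiff_dot3 hA hB).differentiable (by simp) p)
        ((contDiff_dot3 hB hB).differentiable (by simp) p),
      fderiv_dot3 A A p w (dA p) (dA p), fderiv_dot3 B B p w (dB p) (dB p),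
      fderiv_dot3 A B p w (dA p) (dB p)]
  rw [hstep]
  have e2 : (fun p =>
        (dot3 (Aw p) (A p) + dot3 (A p) (Aw p)) * dot3 (B p) (B p)
        + dot3 (A p) (A p) * (dot3 (Bw p) (B p) + dot3 (B p) (Bw p))
        - 2 * dot3 (A p) (B p) * (dot3 (Aw p) (B p) + dot3 (A p) (Bw p)))
      = fun p =>
        ((fun p => (dot3 (Aw p) (A p) + dot3 (A p) (Aw p)) * dot3 (B p) (B p)) p
        + (fun p => dot3 (A p) (A p) * (dot3 (Bw p) (B p) + dot3 (B p) (Bw p))) p)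
        - (fun p => (2 * dot3 (A p) (B p)) * (dot3 (Aw p) (B p) + dot3 (A p) (Bw p))) p := rfl
  rw [e2, fderiv_sub3
      (((hx1.mul hGU).add (hEU.mul hy1)).differentiable (by simp) (0,0))
      ((hz0.mul hz1).differentiable (by simp) (0,0)),
    fderiv_add3 ((hx1.mul hGU).differentiable (by simp) (0,0))
      ((hEU.mul hy1).differentiable (by simp) (0,0)),
    fderiv_mul3 (hx1.differentiable (by simp) (0,0)) (hGU.differentiable (by simp) (0,0)),
    fderiv_mul3 (hEU.differentiable (by simp) (0,0)) (hy1.differentiable (by simp) (0,0)),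
    fderiv_mul3 (hz0.differentiable (by simp) (0,0)) (hz1.differentiable (by simp) (0,0)),
    fderiv_dot3 B B (0,0) w' (dB _) (dB _),
    fderiv_add3 ((contDiff_dot3 hBw hB).differentiable (by simp) (0,0))
      ((contDiff_dot3 hB hBw).differentiable (by simp) (0,0)),
    fderiv_dot3 Bw B (0,0) w' (dBw _) (dB _),
    fderiv_dot3 B Bw (0,0) w' (dB _) (dBw _),
    fderiv_cmul3 2 ((contDiff_dot3 hA hB).differentiable (by simp) (0,0)),
    fderiv_dot3 A B (0,0) w' (dA _) (dB _)]
  simp only [hB0, hAwdef, hBwdef, dot3, Prod.fst_zero, Prod.snd_zero]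
  ring

set_option maxHeartbeats 2000000 in
/-- `Δ² = (1/(4E))·(h_{uu}h_{vv} − h_{uv}²)` at the origin,
where `h = EG − F²`. -/
theorem stmt_10 (f : ℝ → ℝ → ℝ × ℝ × ℝ)
    (hf : ContDiff ℝ (⊤ : ℕ∞) (fun p : ℝ × ℝ => f p.1 p.2))
    (hfv : p2 f 0 0 = 0)
    (hΔ : det3 (p1 f 0 0) (p1 (p2 f) 0 0) (p2 (p2 f) 0 0) ≠ 0) :
    let E : ℝ → ℝ → ℝ := fun u v => dot3 (p1 f u v) (p1 f u v)
    let F : ℝ → ℝ → ℝ := fun u v => dot3 (p1 f u v) (p2 f u v)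
    let G : ℝ → ℝ → ℝ := fun u v => dot3 (p2 f u v) (p2 f u v)
    let h : ℝ → ℝ → ℝ := fun u v => E u v * G u v - F u v ^ 2
    det3 (p1 f 0 0) (p1 (p2 f) 0 0) (p2 (p2 f) 0 0) ^ 2 =
      1 / (4 * E 0 0) *
        (p1 (p1 h) 0 0 * p2 (p2 h) 0 0 - p1 (p2 h) 0 0 ^ 2) := by
  intro E F G h
  set Fc : ℝ × ℝ → ℝ × ℝ × ℝ := fun p => f p.1 p.2 with hFcdef
  have hFcs : ContDiff ℝ (⊤ : ℕ∞) Fc := hf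
  set A := fun p : ℝ × ℝ => fderiv ℝ Fc p (1, 0) with hAdef
  set B := fun p : ℝ × ℝ => fderiv ℝ Fc p (0, 1) with hBdef
  have hA : ContDiff ℝ (⊤ : ℕ∞) A := smooth_pd hFcs _
  have hB : ContDiff ℝ (⊤ : ℕ∞) B := smooth_pd hFcs _
  have dFc := hFcs.differentiable (by simp)
  have dB := hB.differentiable (by simp)
  have hp1f : ∀ u v : ℝ, p1 f u v = A (u, v) := fun u v => pd1_eq Fc u v (dFc _)
  have hp2f : ∀ u v : ℝ, p2 f u v = B (u, v) := fun u v => pd2_eq Fc u v (dFc _)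
  have hp2fun : p2 f = fun u v => B (u, v) := funext fun u => funext fun v => hp2f u v
  have hfuv : p1 (p2 f) 0 0 = fderiv ℝ B (0, 0) (1, 0) := by
    rw [hp2fun]; exact pd1_eq B 0 0 (dB _)
  have hfvv : p2 (p2 f) 0 0 = fderiv ℝ B (0, 0) (0, 1) := by
    rw [hp2fun]; exact pd2_eq B 0 0 (dB _)
  have hB0 : B (0, 0) = 0 := by rw [← hp2f 0 0]; exact hfv
  set Hc : ℝ × ℝ → ℝ :=
    fun q => dot3 (A q) (A q) * dot3 (B q) (B q) - dot3 (A q) (B q) ^ 2 with hHcdef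
  have hHc : ContDiff ℝ (⊤ : ℕ∞) Hc :=
    ((contDiff_dot3 hA hA).mul (contDiff_dot3 hB hB)).sub ((contDiff_dot3 hA hB).pow 2)
  have dHc := hHc.differentiable (by simp)
  have hh : h = fun u v => Hc (u, v) := by
    funext u v
    show dot3 (p1 f u v) (p1 f u v) * dot3 (p2 f u v) (p2 f u v)
        - dot3 (p1 f u v) (p2 f u v) ^ 2 = _
    rw [hp1f, hp2f]
  set H1 := fun p => fderiv ℝ Hc p (1, 0) with hH1def
  set H2 := fun p => fderiv ℝ Hc p (0, 1) with hH2def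
  have hH1s : ContDiff ℝ (⊤ : ℕ∞) H1 := smooth_pd hHc _
  have hH2s : ContDiff ℝ (⊤ : ℕ∞) H2 := smooth_pd hHc _
  have hp1h : p1 h = fun u v => H1 (u, v) := by
    rw [hh]; funext u v; exact pd1_eq Hc u v (dHc _)
  have hp2h : p2 h = fun u v => H2 (u, v) := by
    rw [hh]; funext u v; exact pd2_eq Hc u v (dHc _)
  have huu : p1 (p1 h) 0 0 = fderiv ℝ H1 (0, 0) (1, 0) := by
    rw [hp1h]; exact pd1_eq H1 0 0 (hH1s.differentiable (by simp) _)
  have hvv : p2 (p2 h) 0 0 = fderiv ℝ H2 (0, 0) (0, 1) := by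
    rw [hp2h]; exact pd2_eq H2 0 0 (hH2s.differentiable (by simp) _)
  have huv : p1 (p2 h) 0 0 = fderiv ℝ H2 (0, 0) (1, 0) := by
    rw [hp2h]; exact pd1_eq H2 0 0 (hH2s.differentiable (by simp) _)
  have hE00 : E 0 0 = dot3 (A (0, 0)) (A (0, 0)) := by
    show dot3 (p1 f 0 0) (p1 f 0 0) = _
    rw [hp1f]
  rw [hp1f, hfuv, hfvv] at hΔ ⊢
  rw [hE00, huu, hvv, huv]
  set a := A (0, 0) with hadef
  set m := fderiv ℝ B (0, 0) (1, 0) with hmdef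
  set n := fderiv ℝ B (0, 0) (0, 1) with hndef
  have k11 : fderiv ℝ H1 (0, 0) (1, 0)
      = 2 * dot3 a a * dot3 m m - 2 * dot3 a m * dot3 a m := by
    rw [hH1def]; exact key A B hA hB hB0 (1, 0) (1, 0)
  have k22 : fderiv ℝ H2 (0, 0) (0, 1)
      = 2 * dot3 a a * dot3 n n - 2 * dot3 a n * dot3 a n := by
    rw [hH2def]; exact key A B hA hB hB0 (0, 1) (0, 1)
  have k21 : fderiv ℝ H2 (0, 0) (1, 0)
      = 2 * dot3 a a * dot3 n m - 2 * dot3 a m * dot3 a n := by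
    rw [hH2def]; exact key A B hA hB hB0 (0, 1) (1, 0)
  rw [k11, k22, k21]
  have hEne : dot3 a a ≠ 0 := by
    intro h0
    have hd : a.1 * a.1 + a.2.1 * a.2.1 + a.2.2 * a.2.2 = 0 := h0
    have h1 : a.1 = 0 := by nlinarith [sq_nonneg a.1, sq_nonneg a.2.1, sq_nonneg a.2.2]
    have h2 : a.2.1 = 0 := by nlinarith [sq_nonneg a.1, sq_nonneg a.2.1, sq_nonneg a.2.2]
    have h3 : a.2.2 = 0 := by nlinarith [sq_nonneg a.1, sq_nonneg a.2.1, sq_nonneg a.2.2]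
    apply hΔ
    show det3 a m n = 0
    simp only [det3, cross3, dot3, h1, h2, h3]
    ring
  field_simp
  simp only [det3, cross3, dot3]
  ring
end
end
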